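/- arXiv:2509.10268 — 2 statements merged into one kernel-verified Lean document; each statement's English description precedes it below -/
import Mathlib

section
/- ψ(X,Y) = 0 if and only if X and Y are independent. -/
/-! Since `E[Q_k(X)] = p_k`, the diagonal terms of `ψ` are `Var(Q_k(X))² / p_k²`, and all terms
are nonnegative. So `ψ = 0` exactly when every `Q_k(X)` is almost surely the constant `p_k`.
Integrating `Q_k(X)` over `{X ∈ s}` turns this into `P(X ∈ s, Y = k) = P(X ∈ s) p_k`, which for
a discrete `Y` is independence. -/

open MeasureTheory ProbabilityTheory Filter Set

noncomputable section

/-- Indicator (as a real-valued function) of the event `Y = k`. -/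
def ind {Ω : Type*} (Y : Ω → ℕ) (k : ℕ) : Ω → ℝ := fun ω => if Y ω = k then 1 else 0

/-- `p_k = P(Y = k)`. -/
def levelProb {Ω : Type*} [MeasurableSpace Ω] (P : Measure Ω) (Y : Ω → ℕ) (k : ℕ) : ℝ :=
  (P {ω | Y ω = k}).toReal

/-- Covariance of two real-valued random variables. -/
def cov {Ω : Type*} [MeasurableSpace Ω] (P : Measure Ω) (f g : Ω → ℝ) : ℝ :=
  ∫ ω, f ω * g ω ∂P - (∫ ω, f ω ∂P) * (∫ ω, g ω ∂P)

/-- `Q_k(X) = P(Y = k ∣ X)`, the conditional expectation of `1{Y=k}` given `σ(X)`. -/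
def condProb {Ω H : Type*} [MeasurableSpace Ω] [MeasurableSpace H]
    (P : Measure Ω) (X : Ω → H) (Y : Ω → ℕ) (k : ℕ) : Ω → ℝ :=
  P[ind Y k | MeasurableSpace.comap X inferInstance]

/-- The dependence coefficient
`ψ(X,Y) = (1/(K−1)) Σ_{k,l=1}^K Cov(Q_k(X), Q_l(X))² / (p_k p_l)`. -/
def psi {Ω H : Type*} [MeasurableSpace Ω] [MeasurableSpace H]
    (P : Measure Ω) (X : Ω → H) (Y : Ω → ℕ) (K : ℕ) : ℝ :=
  (1 / ((K : ℝ) - 1)) * ∑ k ∈ Finset.Icc 1 K, ∑ l ∈ Finset.Icc 1 K,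
    (cov P (condProb P X Y k) (condProb P X Y l)) ^ 2 / (levelProb P Y k * levelProb P Y l)

set_option linter.unusedSectionVars false

section General

variable {Ω : Type*} {mΩ : MeasurableSpace Ω} {μ : Measure Ω}

theorem indepFun_of_measure_inter_preimage_singleton {α β : Type*} [MeasurableSpace α]
    [MeasurableSpace β] [MeasurableSingletonClass β] [Countable β] {f : Ω → α} {g : Ω → β}
    (hf : Measurable f) (hg : Measurable g)
    (h : ∀ s, MeasurableSet s → ∀ b, μ (f ⁻¹' s ∩ g ⁻¹' {b}) = μ (f ⁻¹' s) * μ (g ⁻¹' {b})) :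
    IndepFun f g μ := by
  refine indepFun_iff_measure_inter_preimage_eq_mul.mpr fun s t hs _ => ?_
  have hdisj : t.PairwiseDisjoint fun b => g ⁻¹' {b} :=
    fun a _ b _ hab => (Set.disjoint_singleton.mpr hab).preimage g
  have hmeas : ∀ b ∈ t, MeasurableSet (g ⁻¹' {b}) := fun b _ => hg (measurableSet_singleton b)
  rw [← Set.biUnion_preimage_singleton g t, Set.inter_iUnion₂,
    measure_biUnion t.to_countable (hdisj.mono fun b => Set.inter_subset_right)
      fun b hb => (hf hs).inter (hmeas b hb),
    measure_biUnion t.to_countable hdisj hmeas, ← ENNReal.tsum_mul_left]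
  exact tsum_congr fun b => h s hs b

theorem measure_inter_eq_mul_of_condExp_indicator_ae_eq [IsFiniteMeasure μ]
    {m : MeasurableSpace Ω} (hm : m ≤ mΩ) {A s : Set Ω} (hA : MeasurableSet[mΩ] A)
    (h : μ[A.indicator 1 | m] =ᵐ[μ] fun _ => μ.real A) (hs : MeasurableSet[m] s) :
    μ (s ∩ A) = μ s * μ A := by
  have hreal : μ.real (s ∩ A) = μ.real s * μ.real A := calc
    μ.real (s ∩ A) = ∫ ω in s, A.indicator 1 ω ∂μ := by
      rw [integral_indicator_one hA, measureReal_restrict_apply hA, Set.inter_comm]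
    _ = ∫ ω in s, (μ[A.indicator 1 | m]) ω ∂μ :=
      (setIntegral_condExp hm ((integrable_const (1 : ℝ)).indicator hA) hs).symm
    _ = μ.real s * μ.real A := by
      rw [setIntegral_congr_ae (hm s hs) (h.mono fun ω hω _ => hω), setIntegral_const,
        smul_eq_mul]
  rw [measureReal_def, measureReal_def, measureReal_def, ← ENNReal.toReal_mul] at hreal
  exact (ENNReal.toReal_eq_toReal_iff' (measure_ne_top μ _)
    (ENNReal.mul_ne_top (measure_ne_top μ _) (measure_ne_top μ _))).mp hreal

theorem cov_eq_zero_of_ae_eq_const [IsProbabilityMeasure μ] {f g : Ω → ℝ} {a b : ℝ}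
    (hf : f =ᵐ[μ] fun _ => a) (hg : g =ᵐ[μ] fun _ => b) : cov μ f g = 0 := by
  have hfg : (fun ω => f ω * g ω) =ᵐ[μ] fun _ => a * b := hf.mul hg
  rw [cov, integral_congr_ae hfg, integral_congr_ae hf, integral_congr_ae hg]
  simp

theorem ae_eq_integral_of_cov_self_eq_zero [IsProbabilityMeasure μ] {f : Ω → ℝ}
    (hf : MemLp f 2 μ) (h : cov μ f f = 0) : f =ᵐ[μ] fun _ => ∫ ω, f ω ∂μ := by
  refine ae_eq_integral_of_variance_eq_zero hf ?_
  rw [← covariance_self hf.aemeasurable, covariance_eq_sub hf hf]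
  exact h

end General

theorem Finset.sum_sum_sq_div_mul_eq_zero_iff {ι : Type*} {s : Finset ι} {a : ι → ι → ℝ}
    {w : ι → ℝ} (hw : ∀ i ∈ s, 0 < w i) :
    ∑ i ∈ s, ∑ j ∈ s, a i j ^ 2 / (w i * w j) = 0 ↔ ∀ i ∈ s, ∀ j ∈ s, a i j = 0 := by
  have hnn : ∀ i ∈ s, ∀ j ∈ s, 0 ≤ a i j ^ 2 / (w i * w j) :=
    fun i hi j hj => div_nonneg (sq_nonneg _) (mul_pos (hw i hi) (hw j hj)).le
  rw [Finset.sum_eq_zero_iff_of_nonneg fun i hi => Finset.sum_nonneg (hnn i hi)]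
  refine forall₂_congr fun i hi => ?_
  rw [Finset.sum_eq_zero_iff_of_nonneg (hnn i hi)]
  refine forall₂_congr fun j hj => ?_
  rw [div_eq_zero_iff, or_iff_left (mul_pos (hw i hi) (hw j hj)).ne', sq_eq_zero_iff]

section ConditionalProbability

variable {Ω H : Type*} [MeasurableSpace Ω] [MeasurableSpace H] {P : Measure Ω}
  {X : Ω → H} {Y : Ω → ℕ}

theorem ind_eq_indicator (Y : Ω → ℕ) (k : ℕ) : ind Y k = (Y ⁻¹' {k}).indicator 1 := by
  ext ω
  by_cases h : Y ω = k <;> simp [ind, h]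

theorem levelProb_eq_measureReal (P : Measure Ω) (Y : Ω → ℕ) (k : ℕ) :
    levelProb P Y k = P.real (Y ⁻¹' {k}) :=
  rfl

theorem integral_ind (hY : Measurable Y) (k : ℕ) : ∫ ω, ind Y k ω ∂P = levelProb P Y k := by
  rw [ind_eq_indicator, integral_indicator_one (hY (measurableSet_singleton k))]
  rfl

theorem memLp_condProb [IsFiniteMeasure P] (hY : Measurable Y) (k : ℕ) :
    MemLp (condProb P X Y k) 2 P := by
  refine MemLp.condExp one_le_two ?_
  rw [ind_eq_indicator]
  exact memLp_indicator_const 2 (hY (measurableSet_singleton k)) 1 (Or.inr (measure_ne_top _ _))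

theorem integral_condProb [IsFiniteMeasure P] (hX : Measurable X) (hY : Measurable Y) (k : ℕ) :
    ∫ ω, condProb P X Y k ω ∂P = levelProb P Y k := by
  rw [condProb, integral_condExp hX.comap_le, integral_ind hY]

theorem condProb_eq_levelProb_of_forall_ne {k : ℕ} (hk : ∀ ω, Y ω ≠ k) :
    condProb P X Y k = fun _ => levelProb P Y k := by
  have hempty : Y ⁻¹' {k} = ∅ := Set.eq_empty_of_forall_notMem hk
  ext ω
  simp [condProb, levelProb_eq_measureReal, ind_eq_indicator, hempty]

theorem psi_eq_zero_iff_forall_cov_eq_zero {K : ℕ} (hK : 2 ≤ K)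
    (hp : ∀ k ∈ Finset.Icc 1 K, 0 < levelProb P Y k) :
    psi P X Y K = 0 ↔ ∀ k ∈ Finset.Icc 1 K, ∀ l ∈ Finset.Icc 1 K,
      cov P (condProb P X Y k) (condProb P X Y l) = 0 := by
  have hK' : (1 : ℝ) / ((K : ℝ) - 1) ≠ 0 := by
    have : (2 : ℝ) ≤ K := by exact_mod_cast hK
    exact one_div_ne_zero (by linarith)
  rw [psi, mul_eq_zero, or_iff_right hK', Finset.sum_sum_sq_div_mul_eq_zero_iff hp]

theorem indepFun_iff_forall_condProb_ae_eq [IsFiniteMeasure P] (hX : Measurable X)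
    (hY : Measurable Y) :
    IndepFun X Y P ↔ ∀ k, condProb P X Y k =ᵐ[P] fun _ => levelProb P Y k := by
  constructor
  · intro h k
    have hind := (IndepFun_iff_Indep Y X P).mp h.symm
    have hmeas : StronglyMeasurable[MeasurableSpace.comap Y inferInstance] (ind Y k) := by
      rw [ind_eq_indicator]
      exact stronglyMeasurable_const.indicator ⟨{k}, measurableSet_singleton k, rfl⟩
    have hconst := condExp_indep_eq hY.comap_le hX.comap_le hmeas hind
    rw [integral_ind hY] at hconst
    exact hconst
  · intro h
    refine indepFun_of_measure_inter_preimage_singleton hX hY fun s hs k => ?_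
    refine measure_inter_eq_mul_of_condExp_indicator_ae_eq hX.comap_le
      (hY (measurableSet_singleton k)) ?_ ⟨s, hs, rfl⟩
    have hk := h k
    rw [condProb, ind_eq_indicator] at hk
    exact hk

end ConditionalProbability

theorem psi_eq_zero_iff_indep_general {Ω H : Type*} [MeasurableSpace Ω]
    [MeasurableSpace H]
    (P : Measure Ω) [IsProbabilityMeasure P] (K : ℕ) (hK : 2 ≤ K)
    (X : Ω → H) (Y : Ω → ℕ) (hX : Measurable X) (hY : Measurable Y)
    (hYr : ∀ ω, Y ω ∈ Finset.Icc 1 K)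
    (hp : ∀ k ∈ Finset.Icc 1 K, 0 < P {ω | Y ω = k}) :
    psi P X Y K = 0 ↔ IndepFun X Y P := by
  have hlevel : ∀ k ∈ Finset.Icc 1 K, 0 < levelProb P Y k :=
    fun k hk => ENNReal.toReal_pos (hp k hk).ne' (measure_ne_top P _)
  rw [psi_eq_zero_iff_forall_cov_eq_zero hK hlevel, indepFun_iff_forall_condProb_ae_eq hX hY]
  constructor
  · intro hcov k
    by_cases hk : k ∈ Finset.Icc 1 K
    · simpa only [integral_condProb hX hY] using
        ae_eq_integral_of_cov_self_eq_zero (memLp_condProb hY k) (hcov k hk k hk)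
    · have hYk : ∀ ω, Y ω ≠ k := fun ω hω => hk (hω ▸ hYr ω)
      exact (condProb_eq_levelProb_of_forall_ne hYk).eventuallyEq
  · intro hconst k _ l _
    exact cov_eq_zero_of_ae_eq_const (hconst k) (hconst l)

/-- Theorem 1, part (M2): `ψ(X,Y) = 0` if and only if `X` and `Y` are independent. -/
theorem psi_eq_zero_iff_indep {Ω H : Type*} [MeasurableSpace Ω] [MetricSpace H]
    [MeasurableSpace H] [BorelSpace H] [TopologicalSpace.SeparableSpace H]
    (P : Measure Ω) [IsProbabilityMeasure P] (K : ℕ) (hK : 2 ≤ K)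
    (X : Ω → H) (Y : Ω → ℕ) (hX : Measurable X) (hY : Measurable Y)
    (hYr : ∀ ω, Y ω ∈ Finset.Icc 1 K)
    (hp : ∀ k ∈ Finset.Icc 1 K, 0 < P {ω | Y ω = k}) :
    psi P X Y K = 0 ↔ IndepFun X Y P :=
  psi_eq_zero_iff_indep_general P K hK X Y hX hY hYr hp
end
end

section
/- For k ∈ {1,…,K} let V_k := {(x,u) ∈ ℋ × (0,1) : f(x,u) = k}. If P((X,U) ∈ ∪_{k=1}^K ∂V_k) = 0, where ∂V_k denotes the topological boundary of V_k in ℋ × (0,1) and U is Uniform(0,1) independent of X, then for Lebesgue-almost every u ∈ (0,1) one has f(X_{N(1)}, u) → f(X_1, u) in probability as n → ∞. -/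
/-! Because `U` is uniform on `(0,1)` and independent of `X`, the boundary hypothesis says that
for almost every `u` the point `(X, u)` almost surely avoids every `∂V_k`. As `Σ_k g_k(X) = 1`
almost surely, `f(X, u) ∈ {1,…,K}`, so `(X, u)` lies in the interior of its own region and
`f(·, u)` is constant near `X_1`. By the second Borel–Cantelli lemma and separability, `X_1` is
almost surely a cluster point of `X_2, X_3, …`, so the nearest neighbour `X_{N(1)}` eventually
falls into that neighbourhood. Since `N` need not be measurable, the convergence in probability
is obtained by dominating the bad event by the measurable event that *some* nearest neighbour of
`X_1` among the first `n` points carries a different label. -/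

open MeasureTheory ProbabilityTheory Filter Set

noncomputable section

open scoped Classical

/-- `ω`-wise property characterizing a nearest-neighbour assignment `N`: for each sample
size `n ≥ 2` and each `i < n`, `N n i ω` is the index `j < n`, `j ≠ i`, uniquely (strictly)
minimizing `dist (X i ω) (X j ω)` over `j ≠ i`. -/
def IsNNFun {Ω H : Type*} [MetricSpace H] (X : ℕ → Ω → H) (N : ℕ → ℕ → Ω → ℕ) (ω : Ω) : Prop :=
  ∀ n, 2 ≤ n → ∀ i < n, N n i ω < n ∧ N n i ω ≠ i ∧
    ∀ j < n, j ≠ i → j ≠ N n i ω → dist (X i ω) (X (N n i ω) ω) < dist (X i ω) (X j ω)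

/-- `\hat p_{k,l} = n⁻¹ Σ_{i=1}^n 1{Y_i = k, Y_{N(i)} = l}`. -/
def phat {Ω : Type*} (Y : ℕ → Ω → ℕ) (N : ℕ → ℕ → Ω → ℕ) (n k l : ℕ) (ω : Ω) : ℝ :=
  (1 / (n : ℝ)) * ∑ i ∈ Finset.range n, if Y i ω = k ∧ Y (N n i ω) ω = l then 1 else 0

/-- `\hat p_k = Σ_{l=1}^K \hat p_{k,l}`. -/
def phatRow {Ω : Type*} (K : ℕ) (Y : ℕ → Ω → ℕ) (N : ℕ → ℕ → Ω → ℕ) (n k : ℕ) (ω : Ω) : ℝ :=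
  ∑ l ∈ Finset.Icc 1 K, phat Y N n k l ω

/-- `\hat q_l = Σ_{k=1}^K \hat p_{k,l}`. -/
def qhatCol {Ω : Type*} (K : ℕ) (Y : ℕ → Ω → ℕ) (N : ℕ → ℕ → Ω → ℕ) (n l : ℕ) (ω : Ω) : ℝ :=
  ∑ k ∈ Finset.Icc 1 K, phat Y N n k l ω

/-- The estimator `\hatψ(X,Y)`; summands with vanishing denominator are interpreted as `0`. -/
def psihat {Ω : Type*} (K : ℕ) (Y : ℕ → Ω → ℕ) (N : ℕ → ℕ → Ω → ℕ) (n : ℕ) (ω : Ω) : ℝ :=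
  (1 / ((K : ℝ) - 1)) * ∑ k ∈ Finset.Icc 1 K, ∑ l ∈ Finset.Icc 1 K,
    if phatRow K Y N n k ω * qhatCol K Y N n l ω = 0 then 0
    else (phat Y N n k l ω - phatRow K Y N n k ω * qhatCol K Y N n l ω) ^ 2 /
      (phatRow K Y N n k ω * qhatCol K Y N n l ω)

/-- `W_n = n⁻¹ Σ_{i=1}^n 1{N(N(i)) = i}`, the fraction of mutual nearest-neighbour pairs. -/
def Wfrac {Ω : Type*} (N : ℕ → ℕ → Ω → ℕ) (n : ℕ) (ω : Ω) : ℝ :=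
  (1 / (n : ℝ)) * ∑ i ∈ Finset.range n, if N n (N n i ω) ω = i then 1 else 0

/-- `L_n`, the maximal in-degree of the nearest-neighbour graph of the first `n` points. -/
def Ldeg {Ω : Type*} (N : ℕ → ℕ → Ω → ℕ) (n : ℕ) (ω : Ω) : ℕ :=
  Finset.sup (Finset.range n) fun i => ((Finset.range n).filter fun j => N n j ω = i).card

/-- `P_n = √n · vec((\hat p_{k,l} − \hat p_k \hat q_l)_{k,l=1}^{K−1}) ∈ ℝ^{(K−1)²}`
(the pair `(a,b) : Fin (K-1) × Fin (K-1)` encodes the indices `k = a+1`, `l = b+1`). -/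
def Pvec {Ω : Type*} (K : ℕ) (Y : ℕ → Ω → ℕ) (N : ℕ → ℕ → Ω → ℕ) (n : ℕ) (ω : Ω) :
    Fin (K - 1) × Fin (K - 1) → ℝ := fun a =>
  Real.sqrt n * (phat Y N n ((a.1 : ℕ) + 1) ((a.2 : ℕ) + 1) ω -
    phatRow K Y N n ((a.1 : ℕ) + 1) ω * qhatCol K Y N n ((a.2 : ℕ) + 1) ω)

/-- The matrix `\hatΣ_n`. -/
def Sigmahat {Ω : Type*} (K : ℕ) (Y : ℕ → Ω → ℕ) (N : ℕ → ℕ → Ω → ℕ) (n : ℕ) (ω : Ω) :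
    Matrix (Fin (K - 1) × Fin (K - 1)) (Fin (K - 1) × Fin (K - 1)) ℝ := fun a b =>
  let p : ℕ → ℝ := fun k => phatRow K Y N n k ω
  let W : ℝ := Wfrac N n ω
  let k₁ : ℕ := (a.1 : ℕ) + 1
  let l₁ : ℕ := (a.2 : ℕ) + 1
  let k₂ : ℕ := (b.1 : ℕ) + 1
  let l₂ : ℕ := (b.2 : ℕ) + 1
  p k₁ * p l₁ * p k₂ * p l₂ * (1 + W)
    - p k₁ * p l₁ * p l₂ * ((if k₁ = k₂ then 1 else 0) + W * (if l₁ = k₂ then 1 else 0))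
    - p k₁ * p l₁ * p k₂ * ((if l₁ = l₂ then 1 else 0) + W * (if k₁ = l₂ then 1 else 0))
    + p k₁ * p l₁ * ((if k₁ = k₂ ∧ l₁ = l₂ then 1 else 0) +
        W * (if k₁ = l₂ ∧ l₁ = k₂ then 1 else 0))

/-- The test statistic `I_n = P_n' \hatΣ_n^{-1} P_n`, set to `0` when `\hatΣ_n` is singular. -/
def Istat {Ω : Type*} (K : ℕ) (Y : ℕ → Ω → ℕ) (N : ℕ → ℕ → Ω → ℕ) (n : ℕ) (ω : Ω) : ℝ :=
  if IsUnit (Sigmahat K Y N n ω).det then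
    dotProduct (Pvec K Y N n ω) (Matrix.mulVec (Sigmahat K Y N n ω)⁻¹ (Pvec K Y N n ω))
  else 0

/-- `f(x,u) = min{k ∈ {1,…,K} : Σ_{j=1}^k g_j(x) > u}`. -/
def catf (K : ℕ) {H : Type*} (g : ℕ → H → ℝ) (x : H) (u : ℝ) : ℕ :=
  sInf {k | k ∈ Finset.Icc 1 K ∧ u < ∑ j ∈ Finset.Icc 1 k, g j x}

open Topology

theorem Nat.sInf_eq_iff {S : Set ℕ} {m : ℕ} :
    sInf S = m ↔ (m ∈ S ∧ ∀ j < m, j ∉ S) ∨ (m = 0 ∧ ∀ k, k ∉ S) := by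
  constructor
  · rintro rfl
    rcases S.eq_empty_or_nonempty with rfl | hS
    · exact Or.inr ⟨Nat.sInf_empty, fun _ => id⟩
    · exact Or.inl ⟨Nat.sInf_mem hS, fun _ => Nat.notMem_of_lt_sInf⟩
  · rintro (⟨hm, hmin⟩ | ⟨rfl, hS⟩)
    · refine le_antisymm (Nat.sInf_le hm) (not_lt.1 fun hlt => ?_)
      exact hmin _ hlt (Nat.sInf_mem ⟨m, hm⟩)
    · exact Nat.sInf_eq_zero.2 (Or.inr (Set.eq_empty_iff_forall_notMem.2 hS))

theorem measurable_sInf_setOf {α : Type*} [MeasurableSpace α] {p : ℕ → α → Prop}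
    (hp : ∀ k, Measurable (p k)) : Measurable fun a => sInf {k | p k a} := by
  refine measurable_to_countable' fun m => ?_
  have hpre : (fun a => sInf {k | p k a}) ⁻¹' {m} =
      {a | (p m a ∧ ∀ j < m, ¬ p j a) ∨ (m = 0 ∧ ∀ k, ¬ p k a)} := by
    ext a
    exact Nat.sInf_eq_iff
  rw [hpre]
  exact measurableSet_setOfPred.2 (by fun_prop)

section Catf

variable {H : Type*} {K : ℕ} {g : ℕ → H → ℝ}

theorem measurable_catf [MeasurableSpace H] (hg : ∀ k, Measurable (g k)) (u : ℝ) :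
    Measurable fun x => catf K g x u :=
  measurable_sInf_setOf fun k => by fun_prop

theorem catf_mem_Icc (hK : 1 ≤ K) {x : H} {u : ℝ} (hu : u < ∑ j ∈ Finset.Icc 1 K, g j x) :
    catf K g x u ∈ Finset.Icc 1 K :=
  (Nat.sInf_mem (s := {k | k ∈ Finset.Icc 1 K ∧ u < ∑ j ∈ Finset.Icc 1 k, g j x})
    ⟨K, Finset.mem_Icc.2 ⟨hK, le_rfl⟩, hu⟩).1

theorem eventually_catf_eq_of_notMem_frontier [TopologicalSpace H] (hK : 1 ≤ K) {x : H} {u : ℝ}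
    (hu : u ∈ Ioo (0 : ℝ) 1) (hsum : ∑ j ∈ Finset.Icc 1 K, g j x = 1)
    (hx : (x, u) ∉ ⋃ k ∈ Finset.Icc 1 K,
      frontier {q : H × ℝ | q.2 ∈ Ioo (0 : ℝ) 1 ∧ catf K g q.1 q.2 = k}) :
    ∀ᶠ y in 𝓝 x, catf K g y u = catf K g x u := by
  set k := catf K g x u
  have hk : k ∈ Finset.Icc 1 K := catf_mem_Icc hK (hsum ▸ hu.2)
  set V := {q : H × ℝ | q.2 ∈ Ioo (0 : ℝ) 1 ∧ catf K g q.1 q.2 = k}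
  have hV : V ∈ 𝓝 (x, u) := by
    rw [← mem_interior_iff_mem_nhds,
      mem_interior_iff_notMem_frontier (show (x, u) ∈ V from ⟨hu, rfl⟩)]
    exact fun hfr => hx (mem_iUnion₂.2 ⟨k, hk, hfr⟩)
  exact ((continuous_id.prodMk continuous_const).tendsto x).eventually hV |>.mono fun y hy => hy.2

end Catf

section Sampling

variable {Ω H : Type*} [MeasurableSpace Ω] [MeasurableSpace H] {P : Measure Ω} {X : ℕ → Ω → H}

theorem ae_frequently_mem_of_iIndepFun (hX : ∀ i, Measurable (X i)) (hiid : iIndepFun X P)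
    (hident : ∀ i, IdentDistrib (X i) (X 0) P P) {B : Set H} (hB : MeasurableSet B)
    (hB0 : P (X 0 ⁻¹' B) ≠ 0) : ∀ᵐ ω ∂P, ∃ᶠ j in atTop, X j ω ∈ B := by
  have hind : iIndepSet (fun j => X j ⁻¹' B) P :=
    iIndep_comap_mem_iff.1 (hiid.comp (fun _ x => x ∈ B) fun _ => measurable_mem.2 hB)
  have hsum : ∑' j, P (X j ⁻¹' B) = ⊤ := by
    simp only [fun j => (hident j).measure_mem_eq hB]
    exact ENNReal.tsum_const_eq_top_of_ne_zero hB0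
  have := hiid.isProbabilityMeasure
  have hlimsup : ∀ᵐ ω ∂P, ω ∈ limsup (fun j => X j ⁻¹' B) atTop := by
    have hm : MeasurableSet (limsup (fun j => X j ⁻¹' B) atTop) :=
      .measurableSet_limsup fun j => hX j hB
    rw [ae_mem_iff_measure_eq hm.nullMeasurableSet,
      measure_limsup_eq_one (fun j => hX j hB) hind hsum, measure_univ]
  simpa only [mem_limsup_iff_frequently_mem, mem_preimage] using hlimsup

theorem ae_mapClusterPt_of_iIndepFun [TopologicalSpace H] [SecondCountableTopology H]
    [OpensMeasurableSpace H] (hX : ∀ i, Measurable (X i)) (hiid : iIndepFun X P)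
    (hident : ∀ i, IdentDistrib (X i) (X 0) P P) :
    ∀ᵐ ω ∂P, MapClusterPt (X 0 ω) atTop (X · ω) := by
  set b := TopologicalSpace.countableBasis H
  have hb : ∀ᵐ ω ∂P, ∀ t ∈ b, X 0 ω ∈ t → ∃ᶠ j in atTop, X j ω ∈ t := by
    refine (ae_ball_iff (TopologicalSpace.countable_countableBasis H)).2 fun t ht => ?_
    have htm : MeasurableSet t :=
      ((TopologicalSpace.isBasis_countableBasis H).isOpen ht).measurableSet
    by_cases h0 : P (X 0 ⁻¹' t) = 0
    · filter_upwards [measure_eq_zero_iff_ae_notMem.1 h0] with ω hω h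
      exact absurd h hω
    · filter_upwards [ae_frequently_mem_of_iIndepFun hX hiid hident htm h0] with ω hω _ using hω
  filter_upwards [hb] with ω hω
  refine mapClusterPt_iff_frequently.2 fun s hs => ?_
  obtain ⟨t, ht, hxt, hts⟩ :=
    (TopologicalSpace.isBasis_countableBasis H).exists_subset_of_mem_open
      (mem_interior_iff_mem_nhds.2 hs) isOpen_interior
  exact (hω t ht hxt).mono fun j hj => interior_subset (hts hj)

end Sampling

section NearestNeighbour

variable {H : Type*} [MetricSpace H]

/-- Indices are `0`-based: `x 0` is the query point and its neighbours are sought among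
`x 1, …, x (n - 1)`. -/
def IsNearestNeighbour (x : ℕ → H) (n j : ℕ) : Prop :=
  j ∈ Finset.Ico 1 n ∧ ∀ i ∈ Finset.Ico 1 n, dist (x 0) (x j) ≤ dist (x 0) (x i)

theorem IsNNFun.isNearestNeighbour {Ω : Type*} {X : ℕ → Ω → H} {N : ℕ → ℕ → Ω → ℕ} {ω : Ω}
    (hN : IsNNFun X N ω) {n : ℕ} (hn : 2 ≤ n) : IsNearestNeighbour (X · ω) n (N n 0 ω) := by
  obtain ⟨hlt, hne, hmin⟩ := hN n hn 0 (by omega)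
  refine ⟨Finset.mem_Ico.2 ⟨Nat.one_le_iff_ne_zero.2 hne, hlt⟩, fun i hi => ?_⟩
  obtain ⟨hi1, hin⟩ := Finset.mem_Ico.1 hi
  rcases eq_or_ne i (N n 0 ω) with rfl | hiN
  · exact le_rfl
  · exact (hmin i hin (by omega) hiN).le

theorem MapClusterPt.eventually_forall_isNearestNeighbour {x : ℕ → H}
    (hx : MapClusterPt (x 0) atTop x) {p : H → Prop} (hp : ∀ᶠ y in 𝓝 (x 0), p y) :
    ∀ᶠ n in atTop, ∀ j, IsNearestNeighbour x n j → p (x j) := by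
  obtain ⟨δ, hδ, hδs⟩ := Metric.mem_nhds_iff.1 hp
  obtain ⟨j₀, hj₀, hj₀δ⟩ :=
    (mapClusterPt_iff_frequently.1 hx _ (Metric.ball_mem_nhds _ hδ)).forall_exists_of_atTop 1
  filter_upwards [eventually_gt_atTop j₀] with n hn j ⟨_, hj⟩
  refine hδs (Metric.mem_ball'.2 ((hj j₀ (Finset.mem_Ico.2 ⟨hj₀, hn⟩)).trans_lt ?_))
  exact Metric.mem_ball'.1 hj₀δ

end NearestNeighbour

theorem tendsto_measure_exists_isNearestNeighbour_ne {Ω H β : Type*} [MeasurableSpace Ω]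
    [MetricSpace H] [MeasurableSpace H] [OpensMeasurableSpace H] [SecondCountableTopology H]
    [MeasurableSpace β] [MeasurableSingletonClass β] [Countable β]
    {P : Measure Ω} [IsFiniteMeasure P] {X : ℕ → Ω → H} (hX : ∀ i, Measurable (X i))
    {φ : H → β} (hφ : Measurable φ) (hclust : ∀ᵐ ω ∂P, MapClusterPt (X 0 ω) atTop (X · ω))
    (hloc : ∀ᵐ ω ∂P, ∀ᶠ y in 𝓝 (X 0 ω), φ y = φ (X 0 ω)) :
    Tendsto (fun n => P {ω | ∃ j, IsNearestNeighbour (X · ω) n j ∧ φ (X j ω) ≠ φ (X 0 ω)})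
      atTop (𝓝 0) := by
  have hmeas : ∀ n, MeasurableSet
      {ω | ∃ j, IsNearestNeighbour (X · ω) n j ∧ φ (X j ω) ≠ φ (X 0 ω)} := fun n =>
    measurableSet_setOfPred.2 (by unfold IsNearestNeighbour; fun_prop)
  refine measure_empty (μ := P) ▸
    tendsto_measure_of_ae_tendsto_indicator_of_isFiniteMeasure atTop MeasurableSet.empty hmeas ?_
  filter_upwards [hclust, hloc] with ω hω hφω
  filter_upwards [MapClusterPt.eventually_forall_isNearestNeighbour (x := (X · ω)) hω hφω]
    with n hn
  simp only [mem_empty_iff_false, iff_false, not_exists, not_and, not_not]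
  exact hn

theorem ProbabilityTheory.IndepFun.ae_ae_of_ae {Ω α β : Type*} [MeasurableSpace Ω]
    [MeasurableSpace α] [MeasurableSpace β] {P : Measure Ω} [IsFiniteMeasure P]
    {X : Ω → α} {Y : Ω → β} (hXY : IndepFun X Y P) (hX : Measurable X) (hY : Measurable Y)
    {p : α → β → Prop} (hp : MeasurableSet {q : α × β | p q.1 q.2})
    (h : ∀ᵐ ω ∂P, p (X ω) (Y ω)) : ∀ᵐ y ∂(P.map Y), ∀ᵐ ω ∂P, p (X ω) y := by
  have hprod : ∀ᵐ q ∂(P.map X).prod (P.map Y), p q.1 q.2 := by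
    rw [← (indepFun_iff_map_prod_eq_prod_map_map hX.aemeasurable hY.aemeasurable).1 hXY,
      ae_map_iff (hX.prodMk hY).aemeasurable hp]
    exact h
  filter_upwards [(Measure.ae_ae_comm hp).1 ((Measure.ae_prod_iff_ae_ae hp).1 hprod)]
    with y hy using ae_of_ae_map hX.aemeasurable hy

theorem ae_sum_condProb_eq_one {Ω H : Type*} [MeasurableSpace Ω] [MeasurableSpace H]
    {P : Measure Ω} [IsFiniteMeasure P] {X : Ω → H} {Y : Ω → ℕ} (hX : Measurable X)
    (hY : Measurable Y) {s : Finset ℕ} (hYs : ∀ ω, Y ω ∈ s) :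
    ∀ᵐ ω ∂P, ∑ k ∈ s, condProb P X Y k ω = 1 := by
  have hint : ∀ k ∈ s, Integrable (ind Y k) P := fun k _ => by
    rw [show ind Y k = (Y ⁻¹' {k}).indicator 1 by ext ω; simp [ind, indicator_apply]]
    exact (integrable_const (1 : ℝ)).indicator (hY (measurableSet_singleton k))
  have hone : ∑ k ∈ s, ind Y k = fun _ => 1 := by
    funext ω
    simp [ind, hYs ω]
  filter_upwards [condExp_finsetSum hint (MeasurableSpace.comap X inferInstance)] with ω hω
  rw [hone, condExp_const hX.comap_le] at hω
  simpa [condProb, Finset.sum_apply] using hω.symm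

theorem catf_nn_tendsto_in_probability_general {Ω H : Type*} [MeasurableSpace Ω] [MetricSpace H]
    [MeasurableSpace H] [BorelSpace H] [TopologicalSpace.SeparableSpace H]
    (P : Measure Ω) [IsProbabilityMeasure P] (K : ℕ) (hK : 2 ≤ K)
    (X : ℕ → Ω → H) (Y : Ω → ℕ)
    (hXm : ∀ i, Measurable (X i)) (hY : Measurable Y)
    (hYr : ∀ ω, Y ω ∈ Finset.Icc 1 K)
    (hiid : iIndepFun X P)
    (hident : ∀ i, IdentDistrib (X i) (X 0) P P)
    (N : ℕ → ℕ → Ω → ℕ) (hN : ∀ᵐ ω ∂P, IsNNFun X N ω)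
    (g : ℕ → H → ℝ) (hgm : ∀ k, Measurable (g k))
    (hg : ∀ k ∈ Finset.Icc 1 K, (fun ω => g k (X 0 ω)) =ᵐ[P] condProb P (X 0) Y k)
    (U : Ω → ℝ) (hU : Measurable U)
    (hUdist : Measure.map U P = volume.restrict (Set.Ioo (0 : ℝ) 1))
    (hUX : IndepFun U (X 0) P)
    (hboundary : Measure.map (fun ω => (X 0 ω, U ω)) P
      (⋃ k ∈ Finset.Icc 1 K,
        frontier {q : H × ℝ | q.2 ∈ Set.Ioo (0 : ℝ) 1 ∧ catf K g q.1 q.2 = k}) = 0) :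
    ∀ᵐ u ∂(volume.restrict (Set.Ioo (0 : ℝ) 1)),
      ∀ ε > (0 : ℝ),
        Filter.Tendsto
          (fun n => P {ω | ε ≤ |((catf K g (X (N n 0 ω) ω) u : ℝ)) -
            ((catf K g (X 0 ω) u : ℝ))|})
          Filter.atTop (nhds 0) := by
  set F := ⋃ k ∈ Finset.Icc 1 K,
    frontier {q : H × ℝ | q.2 ∈ Ioo (0 : ℝ) 1 ∧ catf K g q.1 q.2 = k}
  have hF : MeasurableSet F :=
    .biUnion (Finset.countable_toSet _) fun _ _ => isClosed_frontier.measurableSet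
  have hslice : ∀ᵐ u ∂(volume.restrict (Ioo (0 : ℝ) 1)), ∀ᵐ ω ∂P, (X 0 ω, u) ∉ F :=
    hUdist ▸ hUX.symm.ae_ae_of_ae (p := fun x u => (x, u) ∉ F) (hXm 0) hU hF.compl <|
      ae_of_ae_map ((hXm 0).prodMk hU).aemeasurable (measure_eq_zero_iff_ae_notMem.1 hboundary)
  have hsum : ∀ᵐ ω ∂P, ∑ k ∈ Finset.Icc 1 K, g k (X 0 ω) = 1 := by
    filter_upwards [ae_sum_condProb_eq_one (hXm 0) hY hYr, eventually_all_finset _ |>.2 hg]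
      with ω hω hgω
    rwa [Finset.sum_congr rfl hgω]
  have hclust := ae_mapClusterPt_of_iIndepFun hXm hiid hident
  filter_upwards [ae_restrict_mem measurableSet_Ioo, hslice] with u hu hFu ε hε
  have hloc : ∀ᵐ ω ∂P, ∀ᶠ y in 𝓝 (X 0 ω), catf K g y u = catf K g (X 0 ω) u := by
    filter_upwards [hsum, hFu] with ω h1 h2
    exact eventually_catf_eq_of_notMem_frontier (by omega) hu h1 h2
  refine tendsto_of_tendsto_of_tendsto_of_le_of_le' tendsto_const_nhds
    (tendsto_measure_exists_isNearestNeighbour_ne hXm (measurable_catf hgm u) hclust hloc)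
    (Eventually.of_forall fun _ => zero_le) ?_
  filter_upwards [eventually_ge_atTop 2] with n hn
  refine measure_mono_ae ?_
  filter_upwards [hN] with ω hNω (hbad : ε ≤ |_|)
  refine ⟨N n 0 ω, hNω.isNearestNeighbour hn, fun heq => hε.not_ge ?_⟩
  simpa [heq] using hbad

/-- Lemma 4: if the pair `(X,U)` avoids the boundaries of the decision regions
`V_k = {(x,u) : f(x,u) = k}` almost surely, then for Lebesgue-almost every `u ∈ (0,1)`
we have `f(X_{N(1)}, u) → f(X_1, u)` in probability. -/
theorem catf_nn_tendsto_in_probability {Ω H : Type*} [MeasurableSpace Ω] [MetricSpace H]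
    [MeasurableSpace H] [BorelSpace H] [TopologicalSpace.SeparableSpace H]
    (P : Measure Ω) [IsProbabilityMeasure P] (K : ℕ) (hK : 2 ≤ K)
    (X : ℕ → Ω → H) (Y : Ω → ℕ)
    (hXm : ∀ i, Measurable (X i)) (hY : Measurable Y)
    (hYr : ∀ ω, Y ω ∈ Finset.Icc 1 K)
    (hp : ∀ k ∈ Finset.Icc 1 K, 0 < P {ω | Y ω = k})
    (hiid : iIndepFun X P)
    (hident : ∀ i, IdentDistrib (X i) (X 0) P P)
    (N : ℕ → ℕ → Ω → ℕ) (hN : ∀ᵐ ω ∂P, IsNNFun X N ω)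
    (g : ℕ → H → ℝ) (hgm : ∀ k, Measurable (g k))
    (hgr : ∀ k x, g k x ∈ Set.Icc (0 : ℝ) 1)
    (hg : ∀ k ∈ Finset.Icc 1 K, (fun ω => g k (X 0 ω)) =ᵐ[P] condProb P (X 0) Y k)
    (U : Ω → ℝ) (hU : Measurable U)
    (hUdist : Measure.map U P = volume.restrict (Set.Ioo (0 : ℝ) 1))
    (hUX : IndepFun U (X 0) P)
    (hboundary : Measure.map (fun ω => (X 0 ω, U ω)) P
      (⋃ k ∈ Finset.Icc 1 K,
        frontier {q : H × ℝ | q.2 ∈ Set.Ioo (0 : ℝ) 1 ∧ catf K g q.1 q.2 = k}) = 0) :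
    ∀ᵐ u ∂(volume.restrict (Set.Ioo (0 : ℝ) 1)),
      ∀ ε > (0 : ℝ),
        Filter.Tendsto
          (fun n => P {ω | ε ≤ |((catf K g (X (N n 0 ω) ω) u : ℝ)) -
            ((catf K g (X 0 ω) u : ℝ))|})
          Filter.atTop (nhds 0) :=
  catf_nn_tendsto_in_probability_general P K hK X Y hXm hY hYr hiid hident N hN g hgm hg U hU hUdist
    hUX hboundary
end
end
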